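/- arXiv:1106.3611 — 2 statements merged into one kernel-verified Lean document; each statement's English description precedes it below -/
import Mathlib

section
/- Let A = A_2(2, α_1, α_2, γ) and D u = Σ_{j=0}^2 λ_j(x) e_j ∂_j u with real-valued λ_j and e_0 = 1. For C¹ functions u, v : ℝ^3 → A, writing u = u_0 + u_1 e_1 + u_2 e_2 + u_{12} e_{12}, the product rule takes the form D(u·v) = (Du)·v + u·(Dv) + 2λ_1[-u_2 γ - u_{12} γ e_1 - u_{12} α_1 e_2 + u_2 e_{12}] ∂_1 v + 2λ_2[u_1 γ + u_{12} α_2 e_1 + u_{12} γ e_2 - u_1 e_{12}] ∂_2 v. -/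
/-!
Since `D` is a first-order operator with coefficients `λⱼ eⱼ`, the Leibniz rule for the
partial derivatives gives `D(uv) = (Du)v + u(Dv) + Σⱼ λⱼ [eⱼ, u] ∂ⱼv`: the only defect
comes from moving `e₁`, `e₂` past `u`. The commutators `[eⱼ, u]` are computed from the
defining relations of `A₂(2, α₁, α₂, γ)`.
-/

/-- Partial derivative in the `k`-th coordinate direction. -/
noncomputable def pd {m : ℕ} {F : Type*} [NormedAddCommGroup F] [NormedSpace ℝ F]
    (k : Fin m) (u : (Fin m → ℝ) → F) (x : Fin m → ℝ) : F :=
  fderiv ℝ u x (Pi.single k 1)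

/-- The generalized Cauchy–Riemann operator in `A₂(2, α₁, α₂, γ)`:
`Dw = λ₀∂₀w + λ₁e₁∂₁w + λ₂e₂∂₂w`. -/
noncomputable def D2op {A : Type*} [NormedRing A] [NormedAlgebra ℝ A]
    (lam : Fin 3 → (Fin 3 → ℝ) → ℝ) (e₁ e₂ : A)
    (w : (Fin 3 → ℝ) → A) (x : Fin 3 → ℝ) : A :=
  lam 0 x • pd 0 w x + lam 1 x • (e₁ * pd 1 w x) + lam 2 x • (e₂ * pd 2 w x)

lemma pd_mul {m : ℕ} {A : Type*} [NormedRing A] [NormedAlgebra ℝ A]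
    (k : Fin m) {a b : (Fin m → ℝ) → A} {x : Fin m → ℝ}
    (ha : DifferentiableAt ℝ a x) (hb : DifferentiableAt ℝ b x) :
    pd k (fun y => a y * b y) x = pd k a x * b x + a x * pd k b x := by
  simp only [pd, fderiv_fun_mul' ha hb, add_apply, smul_apply, MulOpposite.smul_eq_mul_unop,
    MulOpposite.unop_op, smul_eq_mul]
  abel

lemma D2op_mul_eq_add_commutator {A : Type*} [NormedRing A] [NormedAlgebra ℝ A]
    (lam : Fin 3 → (Fin 3 → ℝ) → ℝ) (e₁ e₂ : A) {u v : (Fin 3 → ℝ) → A} {x : Fin 3 → ℝ}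
    (hu : DifferentiableAt ℝ u x) (hv : DifferentiableAt ℝ v x) :
    D2op lam e₁ e₂ (fun y => u y * v y) x =
      D2op lam e₁ e₂ u x * v x + u x * D2op lam e₁ e₂ v x
      + lam 1 x • ((e₁ * u x - u x * e₁) * pd 1 v x)
      + lam 2 x • ((e₂ * u x - u x * e₂) * pd 2 v x) := by
  simp only [D2op, pd_mul _ hu hv, mul_add, add_mul, sub_mul, smul_add, smul_sub,
    smul_mul_assoc, mul_smul_comm, mul_assoc]
  abel

section Commutator

variable {R A : Type*} [CommRing R] [Ring A] [Algebra R A] {α₁ α₂ γ : R} {e₁ e₂ : A}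

lemma eq_smul_one_sub_of_add_eq_algebraMap {a b : A} {c : R} (h : a + b = algebraMap R A c) :
    b = c • (1 : A) - a := by
  rw [eq_sub_iff_add_eq, add_comm, h, Algebra.algebraMap_eq_smul_one]

lemma e₁_mul_sub_mul_e₁ (h1 : e₁ * e₁ = algebraMap R A (-α₁))
    (h12 : e₁ * e₂ + e₂ * e₁ = algebraMap R A (2 * γ)) {a₀ a₁ a₂ a₁₂ : R} {a : A}
    (ha : a = a₀ • (1 : A) + a₁ • e₁ + a₂ • e₂ + a₁₂ • (e₁ * e₂)) :
    e₁ * a - a * e₁ =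
      (2 : R) • ((-(a₂ * γ)) • (1 : A) + (-(a₁₂ * γ)) • e₁ + (-(a₁₂ * α₁)) • e₂ +
        a₂ • (e₁ * e₂)) := by
  have h21 := eq_smul_one_sub_of_add_eq_algebraMap h12
  rw [Algebra.algebraMap_eq_smul_one] at h1
  calc e₁ * a - a * e₁ = a₂ • (e₁ * e₂ - e₂ * e₁) + a₁₂ • (e₁ * e₁ * e₂ - e₁ * (e₂ * e₁)) := by
        simp only [ha, mul_add, add_mul, mul_smul_comm, smul_mul_assoc, mul_one, one_mul, mul_assoc]
        module
    _ = _ := by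
        rw [h21, h1, mul_sub, ← mul_assoc, h1]
        simp only [smul_mul_assoc, mul_smul_comm, one_mul, mul_one]
        module

lemma e₂_mul_sub_mul_e₂ (h2 : e₂ * e₂ = algebraMap R A (-α₂))
    (h12 : e₁ * e₂ + e₂ * e₁ = algebraMap R A (2 * γ)) {a₀ a₁ a₂ a₁₂ : R} {a : A}
    (ha : a = a₀ • (1 : A) + a₁ • e₁ + a₂ • e₂ + a₁₂ • (e₁ * e₂)) :
    e₂ * a - a * e₂ =
      (2 : R) • ((a₁ * γ) • (1 : A) + (a₁₂ * α₂) • e₁ + (a₁₂ * γ) • e₂ +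
        (-a₁) • (e₁ * e₂)) := by
  have h21 := eq_smul_one_sub_of_add_eq_algebraMap h12
  rw [Algebra.algebraMap_eq_smul_one] at h2
  calc e₂ * a - a * e₂ = a₁ • (e₂ * e₁ - e₁ * e₂) + a₁₂ • (e₂ * e₁ * e₂ - e₁ * (e₂ * e₂)) := by
        simp only [ha, mul_add, add_mul, mul_smul_comm, smul_mul_assoc, mul_one, one_mul, mul_assoc]
        module
    _ = _ := by
        rw [h21, h2, sub_mul]
        simp only [smul_mul_assoc, mul_smul_comm, one_mul, mul_one, mul_assoc, h2]
        module

end Commutator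

theorem D2op_mul_general {A : Type*} [NormedRing A] [NormedAlgebra ℝ A]
    (α₁ α₂ γ : ℝ) (e₁ e₂ : A)
    (h1 : e₁ * e₁ = algebraMap ℝ A (-α₁))
    (h2 : e₂ * e₂ = algebraMap ℝ A (-α₂))
    (h12 : e₁ * e₂ + e₂ * e₁ = algebraMap ℝ A (2 * γ))
    (lam : Fin 3 → (Fin 3 → ℝ) → ℝ)
    (u₀ u₁ u₂ u₁₂ : (Fin 3 → ℝ) → ℝ)
    (hu₀ : ContDiff ℝ 1 u₀) (hu₁ : ContDiff ℝ 1 u₁)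
    (hu₂ : ContDiff ℝ 1 u₂) (hu₁₂ : ContDiff ℝ 1 u₁₂)
    (u : (Fin 3 → ℝ) → A)
    (hu : ∀ x, u x = u₀ x • (1 : A) + u₁ x • e₁ + u₂ x • e₂ + u₁₂ x • (e₁ * e₂))
    (v : (Fin 3 → ℝ) → A) (hv : ContDiff ℝ 1 v) :
    ∀ x, D2op lam e₁ e₂ (fun y => u y * v y) x =
      D2op lam e₁ e₂ u x * v x + u x * D2op lam e₁ e₂ v x
      + (2 * lam 1 x) •
          (((-(u₂ x * γ)) • (1 : A) + (-(u₁₂ x * γ)) • e₁ + (-(u₁₂ x * α₁)) • e₂ +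
            u₂ x • (e₁ * e₂)) * pd 1 v x)
      + (2 * lam 2 x) •
          (((u₁ x * γ) • (1 : A) + (u₁₂ x * α₂) • e₁ + (u₁₂ x * γ) • e₂ +
            (-(u₁ x)) • (e₁ * e₂)) * pd 2 v x) := by
  intro x
  have hu_diff : Differentiable ℝ u := by
    rw [show u = _ from funext hu]
    fun_prop
  rw [D2op_mul_eq_add_commutator lam e₁ e₂ (hu_diff x) (hv.differentiable one_ne_zero x),
    e₁_mul_sub_mul_e₁ h1 h12 (hu x), e₂_mul_sub_mul_e₂ h2 h12 (hu x)]
  simp only [smul_mul_assoc, smul_smul, mul_comm (lam _ x)]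

/-- Explicit product rule for `D` in `A₂(2, α₁, α₂, γ)`, for
`u = u₀ + u₁e₁ + u₂e₂ + u₁₂e₁₂`:
`D(u·v) = (Du)·v + u·(Dv) + 2λ₁[-u₂γ - u₁₂γe₁ - u₁₂α₁e₂ + u₂e₁₂]∂₁v
         + 2λ₂[u₁γ + u₁₂α₂e₁ + u₁₂γe₂ - u₁e₁₂]∂₂v`. -/
theorem D2op_mul {A : Type*} [NormedRing A] [NormedAlgebra ℝ A]
    [FiniteDimensional ℝ A]
    (α₁ α₂ γ : ℝ) (e₁ e₂ : A)
    (h1 : e₁ * e₁ = algebraMap ℝ A (-α₁))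
    (h2 : e₂ * e₂ = algebraMap ℝ A (-α₂))
    (h12 : e₁ * e₂ + e₂ * e₁ = algebraMap ℝ A (2 * γ))
    (lam : Fin 3 → (Fin 3 → ℝ) → ℝ)
    (u₀ u₁ u₂ u₁₂ : (Fin 3 → ℝ) → ℝ)
    (hu₀ : ContDiff ℝ 1 u₀) (hu₁ : ContDiff ℝ 1 u₁)
    (hu₂ : ContDiff ℝ 1 u₂) (hu₁₂ : ContDiff ℝ 1 u₁₂)
    (u : (Fin 3 → ℝ) → A)
    (hu : ∀ x, u x = u₀ x • (1 : A) + u₁ x • e₁ + u₂ x • e₂ + u₁₂ x • (e₁ * e₂))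
    (v : (Fin 3 → ℝ) → A) (hv : ContDiff ℝ 1 v) :
    ∀ x, D2op lam e₁ e₂ (fun y => u y * v y) x =
      D2op lam e₁ e₂ u x * v x + u x * D2op lam e₁ e₂ v x
      + (2 * lam 1 x) •
          (((-(u₂ x * γ)) • (1 : A) + (-(u₁₂ x * γ)) • e₁ + (-(u₁₂ x * α₁)) • e₂ +
            u₂ x • (e₁ * e₂)) * pd 1 v x)
      + (2 * lam 2 x) •
          (((u₁ x * γ) • (1 : A) + (u₁₂ x * α₂) • e₁ + (u₁₂ x * γ) • e₂ +
            (-(u₁ x)) • (e₁ * e₂)) * pd 2 v x) :=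
  D2op_mul_general α₁ α₂ γ e₁ e₂ h1 h2 h12 lam u₀ u₁ u₂ u₁₂ hu₀ hu₁ hu₂ hu₁₂ u hu v hv
end

section
/- Let u : Ω ⊆ ℝ^{n+1} → A_n(2, α_j, γ_ij) be a C² function satisfying Du = 0, where Du = Σ_{j=0}^n λ_j(x) e_j ∂_j u with real-valued C¹ coefficients λ_j and e_0 = 1. Let D̄u = λ_0(x) ∂_0 u − Σ_{j=1}^n λ_j(x) e_j ∂_j u be the conjugate operator. Then D̄(Du) = Σ_{i=0}^n λ_0 ∂_0(λ_i) e_i ∂_i u − Σ_{j=1}^n Σ_{i=0}^n λ_j e_j ∂_j(λ_i) e_i ∂_i u + λ_0² ∂_0² u + Σ_{i=1}^n α_i λ_i² ∂_i² u − 2 Σ_{i<j} γ_ij λ_i λ_j ∂_i ∂_j u, and this expression vanishes identically on Ω. -/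
open scoped BigOperators

/-- The generalized Cauchy–Riemann operator `Du = Σⱼ λⱼ(x) eⱼ ∂ⱼu` (with `e₀ = 1`). -/
noncomputable def Dop {n : ℕ} {A : Type*} [NormedRing A] [NormedAlgebra ℝ A]
    (lam : Fin (n + 1) → (Fin (n + 1) → ℝ) → ℝ) (e : Fin (n + 1) → A)
    (u : (Fin (n + 1) → ℝ) → A) (x : Fin (n + 1) → ℝ) : A :=
  ∑ j, lam j x • (e j * pd j u x)

/-- The conjugate operator `D̄u = λ₀∂₀u - Σ_{j≥1} λⱼ eⱼ ∂ⱼu`. -/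
noncomputable def Dbar {n : ℕ} {A : Type*} [NormedRing A] [NormedAlgebra ℝ A]
    (lam : Fin (n + 1) → (Fin (n + 1) → ℝ) → ℝ) (e : Fin (n + 1) → A)
    (u : (Fin (n + 1) → ℝ) → A) (x : Fin (n + 1) → ℝ) : A :=
  lam 0 x • pd 0 u x - ∑ j ∈ Finset.Ioi (0 : Fin (n + 1)), lam j x • (e j * pd j u x)

/-!
Since `D̄` is a first-order operator, `D̄(Du)(x)` only depends on the coefficients `λ(x)` and
on the gradient of `Du` at `x`. By the product rule `∂ⱼ(Du) = Σᵢ ∂ⱼλᵢ eᵢ ∂ᵢu + Σᵢ λᵢ eᵢ ∂ⱼ∂ᵢu`;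
the first part produces the terms with derivatives of the coefficients. In `D̄` of the second
part the terms coupling `e₀ = 1` with `eᵢ` cancel, and because the Hessian is symmetric the
products `eⱼeᵢ` only occur through `eᵢ² = -αᵢ` and `eᵢeⱼ + eⱼeᵢ = 2γᵢⱼ`, which are scalars.
The whole expression vanishes because `Du ≡ 0` on the open set `Ω`, so its partial derivatives
vanish there.
-/

open Finset Filter Topology

namespace Finset

theorem sum_sum_eq_sum_diag_add_sum_lt {ι M : Type*} [LinearOrder ι] [AddCommMonoid M]
    (s : Finset ι) (f : ι → ι → M) :
    ∑ i ∈ s, ∑ j ∈ s, f i j = ∑ i ∈ s, f i i + ∑ i ∈ s, ∑ j ∈ s with i < j, (f i j + f j i) := by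
  have hrow : ∀ i ∈ s, ∑ j ∈ s, f i j
      = f i i + ∑ j ∈ s with i < j, f i j + ∑ j ∈ s with j < i, f i j := by
    intro i hi
    have htri : ∀ j, f i j = (if i = j then f i j else 0) + (if i < j then f i j else 0)
        + (if j < i then f i j else 0) := by
      intro j
      rcases lt_trichotomy i j with h | rfl | h
      · simp [h, h.ne, h.not_gt]
      · simp
      · simp [h, h.ne', h.not_gt]
    rw [sum_congr rfl fun j _ => htri j]
    simp only [sum_add_distrib, sum_ite_eq, if_pos hi, sum_filter]
  have hswap : ∑ i ∈ s, ∑ j ∈ s with j < i, f i j = ∑ i ∈ s, ∑ j ∈ s with i < j, f j i := by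
    simp only [sum_filter]
    exact sum_comm
  rw [sum_congr rfl hrow, sum_add_distrib, sum_add_distrib, hswap, add_assoc]
  simp only [sum_add_distrib]

theorem sum_Ioi_sum_Ioi_eq_sum_diag_add_sum_lt {ι M : Type*} [LinearOrder ι]
    [LocallyFiniteOrderTop ι] [AddCommMonoid M] (a : ι) (f : ι → ι → M) :
    ∑ i ∈ Ioi a, ∑ j ∈ Ioi a, f i j
      = ∑ i ∈ Ioi a, f i i + ∑ i ∈ Ioi a, ∑ j ∈ Ioi i, (f i j + f j i) := by
  rw [sum_sum_eq_sum_diag_add_sum_lt]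
  congr 1
  refine sum_congr rfl fun i hi => sum_congr ?_ fun _ _ => rfl
  ext j
  simp only [mem_filter, mem_Ioi] at hi ⊢
  exact ⟨And.right, fun hij => ⟨hi.trans hij, hij⟩⟩

end Finset

theorem Fin.sum_univ_eq_add_sum_Ioi_zero {M : Type*} [AddCommMonoid M] {n : ℕ}
    (f : Fin (n + 1) → M) : ∑ i, f i = f 0 + ∑ i ∈ Ioi 0, f i := by
  rw [Fin.sum_univ_succ, Fin.sum_Ioi_zero]

section Clifford

variable {R A : Type*} [CommRing R] [Ring A] [Algebra R A] {n : ℕ}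

def dbarOfGrad (L : Fin (n + 1) → R) (e g : Fin (n + 1) → A) : A :=
  L 0 • g 0 - ∑ j ∈ Ioi 0, L j • (e j * g j)

theorem dbarOfGrad_add (L : Fin (n + 1) → R) (e g h : Fin (n + 1) → A) :
    dbarOfGrad L e (g + h) = dbarOfGrad L e g + dbarOfGrad L e h := by
  simp only [dbarOfGrad, Pi.add_apply, smul_add, mul_add, sum_add_distrib]
  abel

theorem dbarOfGrad_sum_smul_mul (L : Fin (n + 1) → R) (e v : Fin (n + 1) → A)
    (M : Fin (n + 1) → Fin (n + 1) → R) :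
    dbarOfGrad L e (fun j => ∑ i, M j i • (e i * v i))
      = ∑ i, (L 0 * M 0 i) • (e i * v i)
        - ∑ j ∈ Ioi 0, ∑ i, (L j * M j i) • (e j * (e i * v i)) := by
  simp only [dbarOfGrad, smul_sum, mul_sum, smul_smul, mul_smul_comm]

theorem sum_Ioi_sum_Ioi_smul_gens_mul_of_symm {α : Fin (n + 1) → R}
    {γ : Fin (n + 1) → Fin (n + 1) → R} {e : Fin (n + 1) → A}
    (hsq : ∀ j, j ≠ 0 → e j * e j = algebraMap R A (-(α j)))
    (hanti : ∀ i j, i ≠ 0 → j ≠ 0 → i ≠ j → e i * e j + e j * e i = algebraMap R A (2 * γ i j))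
    (L : Fin (n + 1) → R) {P : Fin (n + 1) → Fin (n + 1) → A} (hP : ∀ i j, P i j = P j i) :
    ∑ j ∈ Ioi 0, ∑ i ∈ Ioi 0, (L j * L i) • (e j * e i * P j i)
      = -∑ i ∈ Ioi 0, (α i * L i ^ 2) • P i i
        + ∑ i ∈ Ioi 0, ∑ j ∈ Ioi i, (2 * γ i j * L i * L j) • P i j := by
  rw [sum_Ioi_sum_Ioi_eq_sum_diag_add_sum_lt, ← sum_neg_distrib]
  congr 1
  · refine sum_congr rfl fun i hi => ?_
    rw [hsq i (mem_Ioi.mp hi).ne', ← Algebra.smul_def, smul_smul, ← neg_smul]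
    ring_nf
  · refine sum_congr rfl fun i hi => sum_congr rfl fun j hj => ?_
    have hi0 := (mem_Ioi.mp hi).ne'
    have hij := mem_Ioi.mp hj
    rw [hP j i, mul_comm (L j), ← smul_add, ← add_mul,
      hanti i j hi0 (hi0.bot_lt.trans hij).ne' hij.ne, ← Algebra.smul_def, smul_smul]
    ring_nf

theorem dbarOfGrad_hessian {α : Fin (n + 1) → R} {γ : Fin (n + 1) → Fin (n + 1) → R}
    {e : Fin (n + 1) → A} (he0 : e 0 = 1)
    (hsq : ∀ j, j ≠ 0 → e j * e j = algebraMap R A (-(α j)))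
    (hanti : ∀ i j, i ≠ 0 → j ≠ 0 → i ≠ j → e i * e j + e j * e i = algebraMap R A (2 * γ i j))
    (L : Fin (n + 1) → R) {P : Fin (n + 1) → Fin (n + 1) → A} (hP : ∀ i j, P i j = P j i) :
    dbarOfGrad L e (fun j => ∑ i, L i • (e i * P j i))
      = (L 0 ^ 2) • P 0 0 + ∑ i ∈ Ioi 0, (α i * L i ^ 2) • P i i
        - ∑ i ∈ Ioi 0, ∑ j ∈ Ioi i, (2 * γ i j * L i * L j) • P i j := by
  have hrow : ∀ j, L j • (e j * ∑ i, L i • (e i * P j i))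
      = (L j * L 0) • (e j * P 0 j) + ∑ i ∈ Ioi 0, (L j * L i) • (e j * e i * P j i) := by
    intro j
    rw [Fin.sum_univ_eq_add_sum_Ioi_zero, he0, one_mul, hP j 0, mul_add, smul_add,
      mul_smul_comm, smul_smul, mul_sum, smul_sum]
    simp only [mul_smul_comm, smul_smul, mul_assoc]
  have hcross : L 0 • ∑ i ∈ Ioi 0, L i • (e i * P 0 i)
      = ∑ j ∈ Ioi 0, (L j * L 0) • (e j * P 0 j) := by
    simp only [smul_sum, smul_smul, mul_comm (L 0)]
  simp only [dbarOfGrad]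
  rw [Fin.sum_univ_eq_add_sum_Ioi_zero, he0, one_mul, sum_congr rfl fun j _ => hrow j,
    sum_add_distrib, sum_Ioi_sum_Ioi_smul_gens_mul_of_symm hsq hanti L hP, smul_add, hcross,
    smul_smul, ← sq]
  abel

end Clifford

section PartialDerivatives

variable {m : ℕ} {F : Type*} [NormedAddCommGroup F] [NormedSpace ℝ F]

theorem pd_eq_zero_of_eventuallyEq_zero {f : (Fin m → ℝ) → F} {x : Fin m → ℝ}
    (hf : f =ᶠ[𝓝 x] 0) (k : Fin m) : pd k f x = 0 := by
  simp [pd, hf.fderiv_eq]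

theorem pd_smul {c : (Fin m → ℝ) → ℝ} {f : (Fin m → ℝ) → F} {x : Fin m → ℝ}
    (hc : DifferentiableAt ℝ c x) (hf : DifferentiableAt ℝ f x) (k : Fin m) :
    pd k (fun y => c y • f y) x = pd k c x • f x + c x • pd k f x := by
  simp [pd, fderiv_fun_smul hc hf, add_comm]

theorem pd_const_mul {A : Type*} [NormedRing A] [NormedAlgebra ℝ A] (a : A)
    {f : (Fin m → ℝ) → A} {x : Fin m → ℝ} (hf : DifferentiableAt ℝ f x) (k : Fin m) :
    pd k (fun y => a * f y) x = a * pd k f x := by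
  simp [pd, fderiv_const_mul hf]

theorem pd_sum {ι : Type*} (s : Finset ι) {f : ι → (Fin m → ℝ) → F} {x : Fin m → ℝ}
    (hf : ∀ i ∈ s, DifferentiableAt ℝ (f i) x) (k : Fin m) :
    pd k (fun y => ∑ i ∈ s, f i y) x = ∑ i ∈ s, pd k (f i) x := by
  simp [pd, fderiv_fun_sum hf]

theorem pd_pd_eq_fderiv_fderiv {u : (Fin m → ℝ) → F} {x : Fin m → ℝ}
    (hu : DifferentiableAt ℝ (fderiv ℝ u) x) (i j : Fin m) :
    pd i (pd j u) x = fderiv ℝ (fderiv ℝ u) x (Pi.single i 1) (Pi.single j 1) := by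
  change fderiv ℝ (fun y => fderiv ℝ u y (Pi.single j 1)) x (Pi.single i 1) = _
  simp [fderiv_clm_apply hu (differentiableAt_const _)]

variable {u : (Fin m → ℝ) → F} {x : Fin m → ℝ}

theorem ContDiffAt.differentiableAt_fderiv (hu : ContDiffAt ℝ 2 u x) :
    DifferentiableAt ℝ (fderiv ℝ u) x :=
  (hu.fderiv_right (by norm_num)).differentiableAt one_ne_zero

theorem ContDiffAt.differentiableAt_pd (hu : ContDiffAt ℝ 2 u x) (k : Fin m) :
    DifferentiableAt ℝ (pd k u) x :=
  hu.differentiableAt_fderiv.clm_apply (differentiableAt_const _)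

theorem ContDiffAt.pd_pd_comm (hu : ContDiffAt ℝ 2 u x) (i j : Fin m) :
    pd i (pd j u) x = pd j (pd i u) x := by
  rw [pd_pd_eq_fderiv_fderiv hu.differentiableAt_fderiv,
    pd_pd_eq_fderiv_fderiv hu.differentiableAt_fderiv]
  exact hu.isSymmSndFDerivAt (by simp) _ _

end PartialDerivatives

theorem pd_Dop {n : ℕ} {A : Type*} [NormedRing A] [NormedAlgebra ℝ A]
    {lam : Fin (n + 1) → (Fin (n + 1) → ℝ) → ℝ} (e : Fin (n + 1) → A)
    {u : (Fin (n + 1) → ℝ) → A} {x : Fin (n + 1) → ℝ}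
    (hlam : ∀ i, DifferentiableAt ℝ (lam i) x) (hu : ContDiffAt ℝ 2 u x) (j : Fin (n + 1)) :
    pd j (Dop lam e u) x
      = ∑ i, pd j (lam i) x • (e i * pd i u x) + ∑ i, lam i x • (e i * pd j (pd i u) x) := by
  have hterm : ∀ i, DifferentiableAt ℝ (fun y => e i * pd i u y) x :=
    fun i => (hu.differentiableAt_pd i).const_mul _
  rw [← sum_add_distrib]
  refine (pd_sum (f := fun i y => lam i y • (e i * pd i u y)) _
    (fun i _ => (hlam i).smul (hterm i)) j).trans (sum_congr rfl fun i _ => ?_)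
  rw [pd_smul (hlam i) (hterm i), pd_const_mul _ (hu.differentiableAt_pd i)]

theorem Dbar_eq_dbarOfGrad {n : ℕ} {A : Type*} [NormedRing A] [NormedAlgebra ℝ A]
    (lam : Fin (n + 1) → (Fin (n + 1) → ℝ) → ℝ) (e : Fin (n + 1) → A)
    (u : (Fin (n + 1) → ℝ) → A) (x : Fin (n + 1) → ℝ) :
    Dbar lam e u x = dbarOfGrad (fun j => lam j x) e (fun j => pd j u x) :=
  rfl

theorem Dbar_Dop_eq_and_vanishes_general {n : ℕ} {A : Type*} [NormedRing A] [NormedAlgebra ℝ A]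
    (α : Fin (n + 1) → ℝ) (γ : Fin (n + 1) → Fin (n + 1) → ℝ)
    (e : Fin (n + 1) → A) (he0 : e 0 = 1)
    (hsq : ∀ j, j ≠ 0 → e j * e j = algebraMap ℝ A (-(α j)))
    (hanti : ∀ i j, i ≠ 0 → j ≠ 0 → i ≠ j →
      e i * e j + e j * e i = algebraMap ℝ A (2 * γ i j))
    (lam : Fin (n + 1) → (Fin (n + 1) → ℝ) → ℝ)
    (hlam : ∀ j, ContDiff ℝ 1 (lam j))
    (Ω : Set (Fin (n + 1) → ℝ)) (hΩ : IsOpen Ω)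
    (u : (Fin (n + 1) → ℝ) → A) (hu : ContDiffOn ℝ 2 u Ω)
    (hmono : ∀ x ∈ Ω, Dop lam e u x = 0) :
    ∀ x ∈ Ω,
      Dbar lam e (Dop lam e u) x =
        (∑ i, (lam 0 x * pd 0 (lam i) x) • (e i * pd i u x))
        - (∑ j ∈ Finset.Ioi (0 : Fin (n + 1)), ∑ i,
            (lam j x * pd j (lam i) x) • (e j * (e i * pd i u x)))
        + (lam 0 x ^ 2) • pd 0 (pd 0 u) x
        + (∑ i ∈ Finset.Ioi (0 : Fin (n + 1)), (α i * lam i x ^ 2) • pd i (pd i u) x)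
        - (∑ i ∈ Finset.Ioi (0 : Fin (n + 1)), ∑ j ∈ Finset.Ioi i,
            (2 * γ i j * lam i x * lam j x) • pd i (pd j u) x) ∧
      (∑ i, (lam 0 x * pd 0 (lam i) x) • (e i * pd i u x))
        - (∑ j ∈ Finset.Ioi (0 : Fin (n + 1)), ∑ i,
            (lam j x * pd j (lam i) x) • (e j * (e i * pd i u x)))
        + (lam 0 x ^ 2) • pd 0 (pd 0 u) x
        + (∑ i ∈ Finset.Ioi (0 : Fin (n + 1)), (α i * lam i x ^ 2) • pd i (pd i u) x)
        - (∑ i ∈ Finset.Ioi (0 : Fin (n + 1)), ∑ j ∈ Finset.Ioi i,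
            (2 * γ i j * lam i x * lam j x) • pd i (pd j u) x) = 0 := by
  intro x hx
  have hux : ContDiffAt ℝ 2 u x := (hu x hx).contDiffAt (hΩ.mem_nhds hx)
  have hlamx : ∀ i, DifferentiableAt ℝ (lam i) x :=
    fun i => ((hlam i).differentiable one_ne_zero) x
  have hvanish : Dbar lam e (Dop lam e u) x = 0 := by
    have hgrad (j) : pd j (Dop lam e u) x = 0 :=
      pd_eq_zero_of_eventuallyEq_zero (eventuallyEq_of_mem (hΩ.mem_nhds hx) hmono) j
    simp [Dbar, hgrad]
  refine (fun hexpand => ⟨hexpand, hexpand ▸ hvanish⟩) ?_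
  rw [Dbar_eq_dbarOfGrad, funext (pd_Dop e hlamx hux), ← Pi.add_def, dbarOfGrad_add,
    dbarOfGrad_sum_smul_mul, dbarOfGrad_hessian he0 hsq hanti _ (hux.pd_pd_comm · ·)]
  abel

/-- For a C² generalized monogenic function `u` (`Du = 0`), the composition `D̄Du`
equals the displayed second-order expression, and that expression vanishes on `Ω`. -/
theorem Dbar_Dop_eq_and_vanishes {n : ℕ} {A : Type*} [NormedRing A] [NormedAlgebra ℝ A]
    [FiniteDimensional ℝ A]
    (α : Fin (n + 1) → ℝ) (γ : Fin (n + 1) → Fin (n + 1) → ℝ)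
    (e : Fin (n + 1) → A) (he0 : e 0 = 1)
    (hsq : ∀ j, j ≠ 0 → e j * e j = algebraMap ℝ A (-(α j)))
    (hanti : ∀ i j, i ≠ 0 → j ≠ 0 → i ≠ j →
      e i * e j + e j * e i = algebraMap ℝ A (2 * γ i j))
    (lam : Fin (n + 1) → (Fin (n + 1) → ℝ) → ℝ)
    (hlam : ∀ j, ContDiff ℝ 1 (lam j))
    (Ω : Set (Fin (n + 1) → ℝ)) (hΩ : IsOpen Ω)
    (u : (Fin (n + 1) → ℝ) → A) (hu : ContDiffOn ℝ 2 u Ω)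
    (hmono : ∀ x ∈ Ω, Dop lam e u x = 0) :
    ∀ x ∈ Ω,
      Dbar lam e (Dop lam e u) x =
        (∑ i, (lam 0 x * pd 0 (lam i) x) • (e i * pd i u x))
        - (∑ j ∈ Finset.Ioi (0 : Fin (n + 1)), ∑ i,
            (lam j x * pd j (lam i) x) • (e j * (e i * pd i u x)))
        + (lam 0 x ^ 2) • pd 0 (pd 0 u) x
        + (∑ i ∈ Finset.Ioi (0 : Fin (n + 1)), (α i * lam i x ^ 2) • pd i (pd i u) x)
        - (∑ i ∈ Finset.Ioi (0 : Fin (n + 1)), ∑ j ∈ Finset.Ioi i,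
            (2 * γ i j * lam i x * lam j x) • pd i (pd j u) x) ∧
      (∑ i, (lam 0 x * pd 0 (lam i) x) • (e i * pd i u x))
        - (∑ j ∈ Finset.Ioi (0 : Fin (n + 1)), ∑ i,
            (lam j x * pd j (lam i) x) • (e j * (e i * pd i u x)))
        + (lam 0 x ^ 2) • pd 0 (pd 0 u) x
        + (∑ i ∈ Finset.Ioi (0 : Fin (n + 1)), (α i * lam i x ^ 2) • pd i (pd i u) x)
        - (∑ i ∈ Finset.Ioi (0 : Fin (n + 1)), ∑ j ∈ Finset.Ioi i,
            (2 * γ i j * lam i x * lam j x) • pd i (pd j u) x) = 0 :=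
  Dbar_Dop_eq_and_vanishes_general α γ e he0 hsq hanti lam hlam Ω hΩ u hu hmono
end
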